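/- Let δ ≥ 0 and let X be a geodesic metric space all of whose geodesic triangles are δ-thin. Let σ be the image of a geodesic segment in X, let a ∈ X, and let c ∈ σ be a nearest point of σ to a (i.e. dist(a,c) ≤ dist(a,w) for all w ∈ σ). Let b ∈ σ, let γ be the image of a geodesic segment from a to c, and let d ∈ γ be a nearest point of γ to b (dist(b,d) ≤ dist(b,w) for all w ∈ γ). Then dist(c,d) ≤ 2δ. -/

import Mathlib

open Metric Set

/-- `s` is the image of a geodesic segment from `x` to `y`. -/
def IsGeodesicSegment {X : Type*} [MetricSpace X] (x y : X) (s : Set X) : Prop :=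
  ∃ γ : ℝ → X, γ 0 = x ∧ γ (dist x y) = y ∧
    (∀ u ∈ Icc (0 : ℝ) (dist x y), ∀ v ∈ Icc (0 : ℝ) (dist x y),
      dist (γ u) (γ v) = |u - v|) ∧
    s = γ '' Icc (0 : ℝ) (dist x y)

/-- A metric space is geodesic: any two points are joined by a geodesic segment. -/
def IsGeodesicMetricSpace (X : Type*) [MetricSpace X] : Prop :=
  ∀ x y : X, ∃ s : Set X, IsGeodesicSegment x y s

/-- All geodesic triangles of `X` are δ-thin: every point on any side lies within
distance δ of the union of the other two sides. -/
def ThinTriangles (X : Type*) [MetricSpace X] (δ : ℝ) : Prop :=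
  ∀ a b c : X, ∀ sab sbc sca : Set X,
    IsGeodesicSegment a b sab → IsGeodesicSegment b c sbc →
    IsGeodesicSegment c a sca →
    ∀ p ∈ sab, ∃ q ∈ sbc ∪ sca, dist p q ≤ δ

/-!
Let `[b, c] ⊆ σ` be the subsegment of `σ` and `[a, b]` any geodesic. Moving along `[a, b]`
from `a` to `b`, the distance to `γ = [a, c]` minus the distance to `[b, c]` changes sign, so
some `p ∈ [a, b]` is equally close to both, hence `δ`-close to both by thinness. Since `c` is a
nearest point of `σ` to `a` and `d` a nearest point of `γ` to `b`, this gives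
`|ac| ≤ |ap| + δ` and `|bd| ≤ |bp| + δ`; adding them, using `|ap| + |pb| = |ab| ≤ |ad| + |db|`
and `|ac| = |ad| + |dc|`, leaves `|dc| ≤ 2δ`.
-/

namespace IsGeodesicSegment

variable {X : Type*} [MetricSpace X] {x y : X} {s : Set X}

lemma left_mem (h : IsGeodesicSegment x y s) : x ∈ s := by
  obtain ⟨g, hg0, -, -, rfl⟩ := h
  exact ⟨0, ⟨le_rfl, dist_nonneg⟩, hg0⟩

lemma right_mem (h : IsGeodesicSegment x y s) : y ∈ s := by
  obtain ⟨g, -, hgL, -, rfl⟩ := h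
  exact ⟨dist x y, ⟨dist_nonneg, le_rfl⟩, hgL⟩

lemma symm (h : IsGeodesicSegment x y s) : IsGeodesicSegment y x s := by
  obtain ⟨g, hg0, hgL, hiso, rfl⟩ := h
  set L := dist x y
  have hyx : dist y x = L := dist_comm y x
  refine ⟨fun t => g (L - t), by simp [hgL], by simp [hyx, hg0], ?_, ?_⟩
  · intro u hu v hv
    rw [hyx] at hu hv
    rw [hiso _ ⟨by linarith [hu.2], by linarith [hu.1]⟩ _ ⟨by linarith [hv.2], by linarith [hv.1]⟩,
      show L - u - (L - v) = v - u by ring, abs_sub_comm]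
  · rw [hyx, ← image_image g (fun t => L - t), image_const_sub_Icc, sub_self, sub_zero]

lemma dist_add_dist_of_mem (h : IsGeodesicSegment x y s) {p : X} (hp : p ∈ s) :
    dist x p + dist p y = dist x y := by
  obtain ⟨g, hg0, hgL, hiso, rfl⟩ := h
  obtain ⟨t, ht, rfl⟩ := hp
  have hL : dist x y ∈ Icc 0 (dist x y) := ⟨dist_nonneg, le_rfl⟩
  have hxp := hiso 0 ⟨le_rfl, ht.1.trans ht.2⟩ t ht
  have hpy := hiso t ht _ hL
  rw [hg0] at hxp
  rw [hgL] at hpy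
  rw [hxp, hpy, abs_of_nonpos (by linarith [ht.1]), abs_of_nonpos (by linarith [ht.2])]
  ring

lemma isPreconnected (h : IsGeodesicSegment x y s) : IsPreconnected s := by
  obtain ⟨g, -, -, hiso, rfl⟩ := h
  have hlip : LipschitzOnWith 1 g (Icc 0 (dist x y)) :=
    LipschitzOnWith.of_dist_le_mul fun u hu v hv => by
      rw [hiso u hu v hv, NNReal.coe_one, one_mul, Real.dist_eq]
  exact isPreconnected_Icc.image g hlip.continuousOn

end IsGeodesicSegment

lemma isGeodesicSegment_image_Icc {X : Type*} [MetricSpace X] {g : ℝ → X} {L : ℝ}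
    (hiso : ∀ u ∈ Icc (0 : ℝ) L, ∀ v ∈ Icc (0 : ℝ) L, dist (g u) (g v) = |u - v|)
    {u v : ℝ} (hu : u ∈ Icc (0 : ℝ) L) (hv : v ∈ Icc (0 : ℝ) L) (huv : u ≤ v) :
    IsGeodesicSegment (g u) (g v) (g '' Icc u v) := by
  have hd : dist (g u) (g v) = v - u := by
    rw [hiso _ hu _ hv, abs_sub_comm, abs_of_nonneg (by linarith)]
  refine ⟨fun t => g (u + t), by simp, by rw [hd]; exact congrArg g (add_sub_cancel u v), ?_, ?_⟩
  · intro s hs t ht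
    rw [hd] at hs ht
    rw [hiso _ ⟨by linarith [hu.1, hs.1], by linarith [hs.2, hv.2]⟩ _
      ⟨by linarith [hu.1, ht.1], by linarith [ht.2, hv.2]⟩, add_sub_add_left_eq_sub]
  · rw [hd, ← image_image g (fun t => u + t), image_const_add_Icc, add_zero, add_sub_cancel]

lemma IsGeodesicSegment.exists_subsegment {X : Type*} [MetricSpace X] {x y : X} {s : Set X}
    (h : IsGeodesicSegment x y s) {p q : X} (hp : p ∈ s) (hq : q ∈ s) :
    ∃ t ⊆ s, IsGeodesicSegment p q t := by
  obtain ⟨g, -, -, hiso, rfl⟩ := h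
  obtain ⟨u, hu, rfl⟩ := hp
  obtain ⟨v, hv, rfl⟩ := hq
  rcases le_total u v with huv | hvu
  · exact ⟨g '' Icc u v, image_mono (Icc_subset_Icc hu.1 hv.2),
      isGeodesicSegment_image_Icc hiso hu hv huv⟩
  · exact ⟨g '' Icc v u, image_mono (Icc_subset_Icc hv.1 hu.2),
      (isGeodesicSegment_image_Icc hiso hv hu hvu).symm⟩

lemma IsGeodesicSegment.exists_infDist_eq {X : Type*} [MetricSpace X] {x y : X} {s : Set X}
    (h : IsGeodesicSegment x y s) {A B : Set X} (hxA : x ∈ A) (hyB : y ∈ B) :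
    ∃ p ∈ s, infDist p A = infDist p B :=
  h.isPreconnected.intermediate_value₂ h.left_mem h.right_mem
    (continuous_infDist_pt A).continuousOn (continuous_infDist_pt B).continuousOn
    (by rw [infDist_zero_of_mem hxA]; exact infDist_nonneg)
    (by rw [infDist_zero_of_mem hyB]; exact infDist_nonneg)

lemma ThinTriangles.exists_infDist_le {X : Type*} [MetricSpace X] {δ : ℝ}
    (hthin : ThinTriangles X δ) {a b c : X} {sab sbc sca : Set X}
    (hab : IsGeodesicSegment a b sab) (hbc : IsGeodesicSegment b c sbc)
    (hca : IsGeodesicSegment c a sca) :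
    ∃ p ∈ sab, infDist p sca ≤ δ ∧ infDist p sbc ≤ δ := by
  obtain ⟨p, hp, heq⟩ := hab.exists_infDist_eq hca.right_mem hbc.left_mem
  obtain ⟨q, hq | hq, hpq⟩ := hthin a b c sab sbc sca hab hbc hca p hp
  · have := (infDist_le_dist_of_mem hq).trans hpq
    exact ⟨p, hp, heq ▸ this, this⟩
  · have := (infDist_le_dist_of_mem hq).trans hpq
    exact ⟨p, hp, this, heq ▸ this⟩

lemma dist_le_dist_add_infDist_of_forall_le {X : Type*} [MetricSpace X] {a c : X} {S : Set X}
    (hS : S.Nonempty) (hnear : ∀ w ∈ S, dist a c ≤ dist a w) (p : X) :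
    dist a c ≤ dist a p + infDist p S :=
  calc dist a c ≤ infDist a S := (le_infDist hS).2 hnear
    _ ≤ infDist p S + dist a p := infDist_le_infDist_add_dist
    _ = dist a p + infDist p S := add_comm _ _

theorem stmt_11_general
    {X : Type*} [MetricSpace X] (δ : ℝ)
    (hgeo : IsGeodesicMetricSpace X) (hthin : ThinTriangles X δ)
    (σ : Set X) (e₁ e₂ : X) (hσ : IsGeodesicSegment e₁ e₂ σ)
    (a : X) (c : X) (hcσ : c ∈ σ) (hcnear : ∀ w ∈ σ, dist a c ≤ dist a w)
    (b : X) (hb : b ∈ σ)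
    (γ : Set X) (hγ : IsGeodesicSegment a c γ)
    (d : X) (hdγ : d ∈ γ) (hdnear : ∀ w ∈ γ, dist b d ≤ dist b w) :
    dist c d ≤ 2 * δ := by
  obtain ⟨sbc, hsub, hbc⟩ := hσ.exists_subsegment hb hcσ
  obtain ⟨sab, hab⟩ := hgeo a b
  obtain ⟨p, hp, hpγ, hpbc⟩ := hthin.exists_infDist_le hab hbc hγ.symm
  have hac : dist a c ≤ dist a p + δ :=
    (dist_le_dist_add_infDist_of_forall_le ⟨b, hbc.left_mem⟩
      (fun w hw => hcnear w (hsub hw)) p).trans (by linarith)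
  have hbd : dist b d ≤ dist b p + δ :=
    (dist_le_dist_add_infDist_of_forall_le ⟨d, hdγ⟩ hdnear p).trans (by linarith)
  have hapb := hab.dist_add_dist_of_mem hp
  have hadc := hγ.dist_add_dist_of_mem hdγ
  have hadb := dist_triangle a d b
  rw [dist_comm p b] at hapb
  rw [dist_comm d b] at hadb
  rw [dist_comm c d]
  linarith

theorem stmt_11
    {X : Type*} [MetricSpace X] (δ : ℝ) (hδ : 0 ≤ δ)
    (hgeo : IsGeodesicMetricSpace X) (hthin : ThinTriangles X δ)
    (σ : Set X) (e₁ e₂ : X) (hσ : IsGeodesicSegment e₁ e₂ σ)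
    (a : X) (c : X) (hcσ : c ∈ σ) (hcnear : ∀ w ∈ σ, dist a c ≤ dist a w)
    (b : X) (hb : b ∈ σ)
    (γ : Set X) (hγ : IsGeodesicSegment a c γ)
    (d : X) (hdγ : d ∈ γ) (hdnear : ∀ w ∈ γ, dist b d ≤ dist b w) :
    dist c d ≤ 2 * δ :=
  stmt_11_general δ hgeo hthin σ e₁ e₂ hσ a c hcσ hcnear b hb γ hγ d hdγ hdnear
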